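/- arXiv:2401.05549 — 2 statements merged into one kernel-verified Lean document; each statement's English description precedes it below -/
import Mathlib

section
/- For ν > 0, a > 0, y > 0, τ > 0, let r(y) = (2ν/a)²/(y^{1/ν} τ) and v(τ, y) = y · ∫_0^{r(y)} η^{ν−1} e^{−η/2} dη / (2^ν Γ(ν)). Then lim_{y→∞} v(τ, y) = (1/ν) (1/Γ(ν)) (2ν²/(a²τ))^ν. -/
open Set Filter Real

lemma ratio_tendsto (ν : ℝ) (hν : 0 < ν) :
    Tendsto (fun r : ℝ => (∫ η in (0:ℝ)..r, η ^ (ν - 1) * Real.exp (-η/2)) / r ^ ν)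
      (nhdsWithin 0 (Ioi 0)) (nhds (1/ν)) := by
  have hlow : Tendsto (fun r : ℝ => Real.exp (-r/2) / ν) (nhdsWithin 0 (Ioi 0)) (nhds (1/ν)) := by
    have : Tendsto (fun r : ℝ => Real.exp (-r/2) / ν) (nhds 0) (nhds (1/ν)) := by
      have := ((Real.continuous_exp.comp (by continuity : Continuous fun r : ℝ => -r/2)).div_const ν).tendsto 0
      simpa using this
    exact this.mono_left nhdsWithin_le_nhds
  refine tendsto_of_tendsto_of_tendsto_of_le_of_le' hlow tendsto_const_nhds ?_ ?_
  · filter_upwards [self_mem_nhdsWithin] with r (hr : 0 < r)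
    have hint1 : IntervalIntegrable (fun η : ℝ => η ^ (ν - 1)) MeasureTheory.volume 0 r :=
      intervalIntegral.intervalIntegrable_rpow' (by linarith)
    have hint2 : IntervalIntegrable (fun η : ℝ => η ^ (ν - 1) * Real.exp (-η/2))
        MeasureTheory.volume 0 r :=
      hint1.mul_continuousOn ((Real.continuous_exp.comp (by continuity :
        Continuous fun η : ℝ => -η/2)).continuousOn)
    have hint3 : IntervalIntegrable (fun η : ℝ => η ^ (ν - 1) * Real.exp (-r/2))
        MeasureTheory.volume 0 r := hint1.mul_const _
    have hmono : (∫ η in (0:ℝ)..r, η ^ (ν - 1) * Real.exp (-r/2)) ≤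
        ∫ η in (0:ℝ)..r, η ^ (ν - 1) * Real.exp (-η/2) := by
      apply intervalIntegral.integral_mono_on hr.le hint3 hint2
      intro η hη
      have h0 : (0:ℝ) ≤ η := hη.1
      have : Real.exp (-r/2) ≤ Real.exp (-η/2) := by
        apply Real.exp_le_exp.mpr; linarith [hη.2]
      exact mul_le_mul_of_nonneg_left this (Real.rpow_nonneg h0 _)
    have hrpow : (∫ η in (0:ℝ)..r, η ^ (ν - 1)) = r ^ ν / ν := by
      rw [integral_rpow (Or.inl (by linarith))]
      rw [Real.zero_rpow (by linarith), sub_add_cancel]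
      ring
    have hval : (∫ η in (0:ℝ)..r, η ^ (ν - 1) * Real.exp (-r/2))
        = Real.exp (-r/2) * (r ^ ν / ν) := by
      rw [intervalIntegral.integral_mul_const, hrpow]; ring
    have hr' : 0 < r ^ ν := Real.rpow_pos_of_pos hr ν
    rw [div_le_div_iff₀ (by positivity) hr']
    calc Real.exp (-r/2) * r ^ ν = (Real.exp (-r/2) * (r ^ ν / ν)) * ν := by field_simp
    _ ≤ (∫ η in (0:ℝ)..r, η ^ (ν - 1) * Real.exp (-η/2)) * ν := by
        rw [← hval]; exact mul_le_mul_of_nonneg_right hmono hν.le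
  · filter_upwards [self_mem_nhdsWithin] with r (hr : 0 < r)
    have hint1 : IntervalIntegrable (fun η : ℝ => η ^ (ν - 1)) MeasureTheory.volume 0 r :=
      intervalIntegral.intervalIntegrable_rpow' (by linarith)
    have hint2 : IntervalIntegrable (fun η : ℝ => η ^ (ν - 1) * Real.exp (-η/2))
        MeasureTheory.volume 0 r :=
      hint1.mul_continuousOn ((Real.continuous_exp.comp (by continuity :
        Continuous fun η : ℝ => -η/2)).continuousOn)
    have hmono : (∫ η in (0:ℝ)..r, η ^ (ν - 1) * Real.exp (-η/2)) ≤
        ∫ η in (0:ℝ)..r, η ^ (ν - 1) := by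
      apply intervalIntegral.integral_mono_on hr.le hint2 hint1
      intro η hη
      have h0 : (0:ℝ) ≤ η := hη.1
      calc η ^ (ν - 1) * Real.exp (-η/2) ≤ η ^ (ν - 1) * 1 := by
            apply mul_le_mul_of_nonneg_left _ (Real.rpow_nonneg h0 _)
            exact Real.exp_le_one_iff.mpr (by linarith)
        _ = η ^ (ν - 1) := mul_one _
    have hrpow : (∫ η in (0:ℝ)..r, η ^ (ν - 1)) = r ^ ν / ν := by
      rw [integral_rpow (Or.inl (by linarith))]
      rw [Real.zero_rpow (by linarith), sub_add_cancel]
      ring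
    have hr' : 0 < r ^ ν := Real.rpow_pos_of_pos hr ν
    rw [div_le_div_iff₀ hr' hν]
    calc (∫ η in (0:ℝ)..r, η ^ (ν - 1) * Real.exp (-η/2)) * ν ≤ (r ^ ν / ν) * ν := by
          rw [← hrpow]; exact mul_le_mul_of_nonneg_right hmono hν.le
      _ = 1 * r ^ ν := by field_simp

/-- CEV forward price limit at infinity: with `r(y) = (2ν/a)²/(y^(1/ν) τ)` and
`v(τ,y) = y ∫_0^{r(y)} η^(ν-1) e^(-η/2) dη / (2^ν Γ(ν))`, one has
`lim_{y→∞} v(τ,y) = (1/ν)(1/Γ(ν)) (2ν²/(a²τ))^ν`. -/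
theorem cev_forward_limit_at_infinity
    (ν a τ : ℝ) (hν : 0 < ν) (ha : 0 < a) (hτ : 0 < τ) :
    Tendsto
      (fun y : ℝ => y *
        (∫ η in (0:ℝ)..((2*ν/a)^2 / (y ^ (1/ν) * τ)),
          η ^ (ν - 1) * Real.exp (-η/2)) / ((2:ℝ) ^ ν * Real.Gamma ν))
      atTop
      (nhds ((1/ν) * (1 / Real.Gamma ν) * (2*ν^2 / (a^2*τ)) ^ ν)) := by
  have hc0 : (0:ℝ) < (2*ν/a)^2 := by positivity
  set c : ℝ := (2*ν/a)^2 with hc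
  have hΓ : 0 < Real.Gamma ν := Real.Gamma_pos_of_pos hν
  have h2ν : (0:ℝ) < (2:ℝ) ^ ν := Real.rpow_pos_of_pos two_pos ν
  have hC0 : (0:ℝ) < (2:ℝ) ^ ν * Real.Gamma ν := by positivity
  set C : ℝ := (2:ℝ) ^ ν * Real.Gamma ν with hC
  set r : ℝ → ℝ := fun y => c / (y ^ (1/ν) * τ) with hrdef
  have hratop : Tendsto (fun y : ℝ => y ^ (1/ν) * τ) atTop atTop :=
    (tendsto_rpow_atTop (by positivity)).atTop_mul_const hτ
  have hr0 : Tendsto r atTop (nhdsWithin 0 (Ioi 0)) := by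
    rw [tendsto_nhdsWithin_iff]
    refine ⟨by simpa [hrdef, one_div] using hratop.const_div_atTop c, ?_⟩
    filter_upwards [eventually_gt_atTop (0:ℝ)] with y hy
    have h1 : 0 < y ^ (1/ν) := Real.rpow_pos_of_pos hy (1/ν)
    exact div_pos hc0 (by positivity)
  have hlim := ((ratio_tendsto ν hν).comp hr0).const_mul ((c/τ) ^ ν / C)
  have hval : ((c/τ) ^ ν / C) * (1/ν)
      = (1/ν) * (1 / Real.Gamma ν) * (2*ν^2 / (a^2*τ)) ^ ν := by
    have hcτ : c / τ = 2 * (2*ν^2 / (a^2*τ)) := by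
      rw [hc]; field_simp
    rw [hcτ, Real.mul_rpow (by norm_num) (by positivity), hC]
    field_simp
  rw [← hval]
  apply hlim.congr'
  filter_upwards [eventually_gt_atTop (0:ℝ)] with y hy
  have hyr : 0 < y ^ (1/ν) := Real.rpow_pos_of_pos hy (1/ν)
  have hrpos : 0 < r y := div_pos hc0 (by positivity)
  have hrν : (r y) ^ ν = c ^ ν / (y * τ ^ ν) := by
    rw [hrdef]
    simp only
    rw [Real.div_rpow hc0.le (by positivity), Real.mul_rpow hyr.le hτ.le,
      ← Real.rpow_mul hy.le, one_div_mul_cancel hν.ne', Real.rpow_one]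
  have hcν : (c/τ) ^ ν = c ^ ν / τ ^ ν := Real.div_rpow hc0.le hτ.le ν
  simp only [Function.comp]
  rw [hrν, hcν]
  have hcp : (0:ℝ) < c ^ ν := Real.rpow_pos_of_pos hc0 ν
  have hτp : (0:ℝ) < τ ^ ν := Real.rpow_pos_of_pos hτ ν
  field_simp
  ring
end

section
/- For ν > 0, a > 0, τ > 0, the CEV forward price v(τ, y) = y · ∫_0^{r(y)} η^{ν−1} e^{−η/2} dη / (2^ν Γ(ν)) with r(y) = (2ν/a)²/(y^{1/ν} τ), is strictly increasing in y ∈ (0,∞) with limits v(τ,0+) = 0 and v(τ,∞) = (2ν²/(a²τ))^ν / (ν Γ(ν)). -/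
/-!
Write `c = (2ν/a)²/τ` and `k = y^(-1/ν)`, so that the upper limit of the integral is `k c`.
The substitution `η = k t` turns `v(τ,y)` into `G(k) / (2^ν Γ(ν))` with
`G(k) = ∫_0^c t^(ν-1) e^(-k t/2) dt`. The integrand of `G` decreases strictly in `k`, and `k`
decreases strictly in `y`, which gives monotonicity; as `y → ∞`, `k → 0+` and
`G(k) → G(0) = c^ν/ν`, since `0 ≤ G(0) - G(k) ≤ (k/2) ∫_0^c t^ν dt`. As `y → 0+`, the truncated
integral is at most the complete one, `2^ν Γ(ν)`, so `0 ≤ v(τ,y) ≤ y`.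
-/

open Set Filter Real MeasureTheory Topology

noncomputable def truncGammaIntegral (ν c k : ℝ) : ℝ :=
  ∫ t in (0:ℝ)..c, t ^ (ν - 1) * exp (-(k * t) / 2)

noncomputable def cevForward (ν a τ y : ℝ) : ℝ :=
  y * (∫ η in (0:ℝ)..((2*ν/a)^2 / (y ^ (1/ν) * τ)), η ^ (ν - 1) * Real.exp (-η/2)) /
    ((2:ℝ) ^ ν * Real.Gamma ν)

section RpowExp

variable {ν : ℝ}

lemma intervalIntegrable_rpow_mul_exp (hν : 0 < ν) (k c : ℝ) :
    IntervalIntegrable (fun t : ℝ => t ^ (ν - 1) * exp (-(k * t) / 2)) volume 0 c :=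
  (intervalIntegral.intervalIntegrable_rpow' (by linarith)).mul_continuousOn
    (Continuous.continuousOn (by fun_prop))

lemma integrableOn_rpow_mul_exp_neg_half (hν : 0 < ν) :
    IntegrableOn (fun x : ℝ => x ^ (ν - 1) * exp (-x / 2)) (Ioi 0) := by
  refine (integrableOn_rpow_mul_exp_neg_mul_rpow (s := ν - 1) (by linarith) one_pos
    one_half_pos).congr_fun (fun x _ => ?_) measurableSet_Ioi
  simp only [rpow_one]
  ring_nf

lemma integral_rpow_mul_exp_neg_half_Ioi (hν : 0 < ν) :
    ∫ x in Ioi (0:ℝ), x ^ (ν - 1) * exp (-x / 2) = 2 ^ ν * Gamma ν := by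
  have h := integral_rpow_mul_exp_neg_mul_Ioi hν one_half_pos
  simp only [one_div, inv_inv, ← div_eq_inv_mul] at h
  simpa [neg_div] using h

lemma integral_rpow_mul_exp_neg_half_nonneg {x : ℝ} (hx : 0 ≤ x) :
    0 ≤ ∫ η in (0:ℝ)..x, η ^ (ν - 1) * exp (-η / 2) :=
  intervalIntegral.integral_nonneg hx fun η hη => by have := rpow_nonneg hη.1 (ν - 1); positivity

lemma integral_rpow_mul_exp_neg_half_le (hν : 0 < ν) {x : ℝ} (hx : 0 ≤ x) :
    ∫ η in (0:ℝ)..x, η ^ (ν - 1) * exp (-η / 2) ≤ 2 ^ ν * Gamma ν := by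
  rw [intervalIntegral.integral_of_le hx, ← integral_rpow_mul_exp_neg_half_Ioi hν]
  refine setIntegral_mono_set (integrableOn_rpow_mul_exp_neg_half hν) ?_
    Ioc_subset_Ioi_self.eventuallyLE
  filter_upwards [ae_restrict_mem measurableSet_Ioi] with η hη
  have := rpow_nonneg (le_of_lt hη) (ν - 1)
  positivity

lemma integral_rpow_mul_exp_neg_half_mul {k c : ℝ} (hk : 0 < k) (hc : 0 ≤ c) :
    ∫ η in (0:ℝ)..k * c, η ^ (ν - 1) * exp (-η / 2) = k ^ ν * truncGammaIntegral ν c k := by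
  rw [← mul_zero k, ← intervalIntegral.smul_integral_comp_mul_left, truncGammaIntegral,
    smul_eq_mul, ← intervalIntegral.integral_const_mul, ← intervalIntegral.integral_const_mul]
  refine intervalIntegral.integral_congr fun t ht => ?_
  rw [uIcc_of_le hc] at ht
  rw [mul_rpow hk.le ht.1, rpow_sub_one hk.ne']
  field_simp

end RpowExp

section TruncGammaIntegral

variable {ν c : ℝ}

lemma truncGammaIntegral_zero (hν : 0 < ν) : truncGammaIntegral ν c 0 = c ^ ν / ν := by
  simp only [truncGammaIntegral, zero_mul, neg_zero, zero_div, exp_zero, mul_one]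
  rw [integral_rpow (Or.inl (by linarith)), sub_add_cancel, zero_rpow hν.ne', sub_zero]

lemma truncGammaIntegral_strictAnti (hν : 0 < ν) (hc : 0 < c) :
    StrictAnti (truncGammaIntegral ν c) := by
  intro k₁ k₂ hk
  rw [truncGammaIntegral, truncGammaIntegral, ← sub_pos,
    ← intervalIntegral.integral_sub (intervalIntegrable_rpow_mul_exp hν _ c)
      (intervalIntegrable_rpow_mul_exp hν _ c)]
  refine intervalIntegral.intervalIntegral_pos_of_pos_on
    ((intervalIntegrable_rpow_mul_exp hν _ c).sub (intervalIntegrable_rpow_mul_exp hν _ c))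
    (fun t ht => ?_) hc
  have hexp : exp (-(k₂ * t) / 2) < exp (-(k₁ * t) / 2) := by
    gcongr
    exact ht.1
  have := rpow_pos_of_pos ht.1 (ν - 1)
  simp only [← mul_sub]
  exact mul_pos this (sub_pos.2 hexp)

lemma truncGammaIntegral_zero_sub_le (hν : 0 < ν) (hc : 0 ≤ c) (k : ℝ) :
    truncGammaIntegral ν c 0 - truncGammaIntegral ν c k ≤ k / 2 * ∫ t in (0:ℝ)..c, t ^ ν := by
  rw [truncGammaIntegral, truncGammaIntegral,
    ← intervalIntegral.integral_sub (intervalIntegrable_rpow_mul_exp hν _ c)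
      (intervalIntegrable_rpow_mul_exp hν _ c), ← intervalIntegral.integral_const_mul]
  refine intervalIntegral.integral_mono_on hc
    ((intervalIntegrable_rpow_mul_exp hν _ c).sub (intervalIntegrable_rpow_mul_exp hν _ c))
    ((intervalIntegral.intervalIntegrable_rpow' (by linarith)).const_mul _) fun t ht => ?_
  have hpow : t ^ ν = t ^ (ν - 1) * t := by
    conv_lhs => rw [← sub_add_cancel ν 1]
    rw [rpow_add' ht.1 (by linarith), rpow_one]
  have hexp := add_one_le_exp (-(k * t) / 2)
  have := rpow_nonneg ht.1 (ν - 1)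
  simp only [zero_mul, neg_zero, zero_div, exp_zero, hpow]
  nlinarith

lemma tendsto_truncGammaIntegral_nhdsGT_zero (hν : 0 < ν) (hc : 0 < c) :
    Tendsto (truncGammaIntegral ν c) (𝓝[>] 0) (𝓝 (c ^ ν / ν)) := by
  rw [← truncGammaIntegral_zero (c := c) hν]
  have hlower : Tendsto (fun k => truncGammaIntegral ν c 0 - k / 2 * ∫ t in (0:ℝ)..c, t ^ ν)
      (𝓝[>] 0) (𝓝 (truncGammaIntegral ν c 0)) := by
    have hk : Tendsto (fun k : ℝ => k) (𝓝[>] 0) (𝓝 0) := nhdsWithin_le_nhds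
    simpa using tendsto_const_nhds.sub ((hk.div_const 2).mul_const (∫ t in (0:ℝ)..c, t ^ ν))
  refine tendsto_of_tendsto_of_tendsto_of_le_of_le' hlower tendsto_const_nhds
    (Eventually.of_forall fun k => ?_) ?_
  · linarith [truncGammaIntegral_zero_sub_le hν hc.le k]
  · filter_upwards [self_mem_nhdsWithin] with k hk
    exact (truncGammaIntegral_strictAnti hν hc hk).le

end TruncGammaIntegral

section CevForward

variable {ν a τ : ℝ}

lemma cevForward_eq (hν : 0 < ν) (hτ : 0 < τ) {y : ℝ} (hy : 0 < y) :
    cevForward ν a τ y =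
      truncGammaIntegral ν ((2*ν/a)^2 / τ) (y ^ (1/ν))⁻¹ / (2 ^ ν * Gamma ν) := by
  have hk : 0 < (y ^ (1/ν))⁻¹ := by positivity
  have hbound : (2*ν/a)^2 / (y ^ (1/ν) * τ) = (y ^ (1/ν))⁻¹ * ((2*ν/a)^2 / τ) := by
    field_simp
  have hkν : y * ((y ^ (1/ν))⁻¹) ^ ν = 1 := by
    rw [inv_rpow (by positivity), ← rpow_mul hy.le, one_div_mul_cancel hν.ne', rpow_one,
      mul_inv_cancel₀ hy.ne']
  rw [cevForward, hbound, integral_rpow_mul_exp_neg_half_mul hk (by positivity), ← mul_assoc,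
    hkν, one_mul]

lemma cevForward_strictMonoOn (hν : 0 < ν) (ha : 0 < a) (hτ : 0 < τ) :
    StrictMonoOn (cevForward ν a τ) (Ioi 0) := by
  intro y₁ hy₁ y₂ hy₂ hy
  have hk : (y₂ ^ (1/ν))⁻¹ < (y₁ ^ (1/ν))⁻¹ :=
    inv_strictAnti₀ (rpow_pos_of_pos hy₁ _) (rpow_lt_rpow hy₁.le hy (by positivity))
  rw [cevForward_eq hν hτ hy₁, cevForward_eq hν hτ hy₂]
  have := Gamma_pos_of_pos hν
  gcongr ?_ / _
  exact truncGammaIntegral_strictAnti hν (by positivity) hk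

lemma cevForward_nonneg (hν : 0 < ν) (hτ : 0 < τ) {y : ℝ} (hy : 0 < y) :
    0 ≤ cevForward ν a τ y := by
  have := Gamma_pos_of_pos hν
  have := integral_rpow_mul_exp_neg_half_nonneg (ν := ν)
    (x := (2*ν/a)^2 / (y ^ (1/ν) * τ)) (by positivity)
  unfold cevForward
  positivity

lemma cevForward_le_self (hν : 0 < ν) (hτ : 0 < τ) {y : ℝ} (hy : 0 < y) :
    cevForward ν a τ y ≤ y := by
  have := Gamma_pos_of_pos hν
  have := integral_rpow_mul_exp_neg_half_le hν
    (x := (2*ν/a)^2 / (y ^ (1/ν) * τ)) (by positivity)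
  rw [cevForward, div_le_iff₀ (by positivity)]
  gcongr

lemma tendsto_cevForward_nhdsGT_zero (hν : 0 < ν) (hτ : 0 < τ) :
    Tendsto (cevForward ν a τ) (𝓝[>] 0) (𝓝 0) :=
  tendsto_of_tendsto_of_tendsto_of_le_of_le' tendsto_const_nhds nhdsWithin_le_nhds
    (eventually_mem_nhdsWithin.mono fun _ hy => cevForward_nonneg hν hτ hy)
    (eventually_mem_nhdsWithin.mono fun _ hy => cevForward_le_self hν hτ hy)

lemma tendsto_cevForward_atTop (hν : 0 < ν) (ha : 0 < a) (hτ : 0 < τ) :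
    Tendsto (cevForward ν a τ) atTop (𝓝 ((2*ν^2 / (a^2*τ)) ^ ν / (ν * Gamma ν))) := by
  have hc : 0 < (2*ν/a)^2 / τ := by positivity
  have hk : Tendsto (fun y : ℝ => (y ^ (1/ν))⁻¹) atTop (𝓝[>] 0) :=
    tendsto_inv_atTop_nhdsGT_zero.comp (tendsto_rpow_atTop (by positivity))
  have hlim : (2*ν^2 / (a^2*τ)) ^ ν / (ν * Gamma ν) =
      ((2*ν/a)^2 / τ) ^ ν / ν / (2 ^ ν * Gamma ν) := by
    rw [show 2*ν^2 / (a^2*τ) = (2*ν/a)^2 / τ / 2 by field_simp,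
      div_rpow hc.le zero_le_two]
    ring
  rw [hlim]
  refine (((tendsto_truncGammaIntegral_nhdsGT_zero hν hc).comp hk).div_const _).congr' ?_
  filter_upwards [eventually_gt_atTop 0] with y hy
  exact (cevForward_eq hν hτ hy).symm

end CevForward

/-- The CEV forward price `v(τ,y) = y ∫_0^{r(y)} η^(ν-1) e^(-η/2) dη/(2^ν Γ(ν))`,
`r(y) = (2ν/a)²/(y^(1/ν) τ)`, is strictly increasing in `y` on `(0,∞)` with limits
`v(τ,0+) = 0` and `v(τ,∞) = (2ν²/(a²τ))^ν/(ν Γ(ν))`. -/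
theorem cev_forward_monotone_and_limits
    (ν a τ : ℝ) (hν : 0 < ν) (ha : 0 < a) (hτ : 0 < τ) :
    StrictMonoOn
        (fun y : ℝ => y *
          (∫ η in (0:ℝ)..((2*ν/a)^2 / (y ^ (1/ν) * τ)),
            η ^ (ν - 1) * Real.exp (-η/2)) / ((2:ℝ) ^ ν * Real.Gamma ν))
        (Ioi (0:ℝ)) ∧
    Tendsto
        (fun y : ℝ => y *
          (∫ η in (0:ℝ)..((2*ν/a)^2 / (y ^ (1/ν) * τ)),
            η ^ (ν - 1) * Real.exp (-η/2)) / ((2:ℝ) ^ ν * Real.Gamma ν))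
        (nhdsWithin 0 (Ioi 0)) (nhds 0) ∧
    Tendsto
        (fun y : ℝ => y *
          (∫ η in (0:ℝ)..((2*ν/a)^2 / (y ^ (1/ν) * τ)),
            η ^ (ν - 1) * Real.exp (-η/2)) / ((2:ℝ) ^ ν * Real.Gamma ν))
        atTop
        (nhds ((2*ν^2 / (a^2*τ)) ^ ν / (ν * Real.Gamma ν))) :=
  ⟨cevForward_strictMonoOn hν ha hτ, tendsto_cevForward_nhdsGT_zero hν hτ,
    tendsto_cevForward_atTop hν ha hτ⟩
end
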